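/- arXiv:nlin/0506064 — 3 statements merged into one kernel-verified Lean document; each statement's English description precedes it below -/
import Mathlib

section
/- Let (Ω, 𝒫) be a probability space, d ≥ 1, and let u : Ω → ℝ → (Fin d → ℝ) → (Fin d → ℝ) be a random time-dependent velocity field. Fix x₀ ∈ (Fin d → ℝ), and suppose that for every starting time t₀ ∈ ℝ and every ω ∈ Ω there is a particle-displacement path ρ t₀ ω : ℝ → (Fin d → ℝ) satisfying ρ t₀ ω t₀ = 0 and, for all s ∈ ℝ, HasDerivAt (ρ t₀ ω) (u ω s (x₀ + ρ t₀ ω s)) s. Define W t₀ t ω (x, x') = u ω t (x + ρ t₀ ω t) − u ω t (x' + ρ t₀ ω t) and w t ω (x, x') = u ω t x − u ω t x', each assumed measurable into the function space with the product (pi) σ-algebra. Assume the Eulerian field is incrementally stationary: for all t and Δt, 𝒫.map (w (t + Δt)) = 𝒫.map (w t). Then the following are equivalent: (i) for all t and t₀, 𝒫.map (W t₀ t) = 𝒫.map (w t); (ii) for all t₀, t and Δt, 𝒫.map (W t₀ (t + Δt)) = 𝒫.map (W t₀ t) (incremental stationarity of the quasi-Lagrangian field with respect to the observation time t). -/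
open MeasureTheory

/-- Assuming incremental stationarity of the Eulerian velocity differences,
equality in law of the quasi-Lagrangian and Eulerian velocity-difference fields
is equivalent to incremental stationarity of the quasi-Lagrangian field with
respect to the observation time `t`. -/
theorem quasiLagrangian_law_eq_iff_stationary_in_t
    (d : ℕ) (hd : 1 ≤ d)
    {Ω : Type*} [MeasurableSpace Ω] (P : Measure Ω) [IsProbabilityMeasure P]
    (u : Ω → ℝ → (Fin d → ℝ) → (Fin d → ℝ))
    (x₀ : Fin d → ℝ)
    (ρ : ℝ → Ω → ℝ → (Fin d → ℝ))
    (hρ0 : ∀ t₀ ω, ρ t₀ ω t₀ = 0)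
    (hρ : ∀ t₀ ω s, HasDerivAt (ρ t₀ ω) (u ω s (x₀ + ρ t₀ ω s)) s)
    (W : ℝ → ℝ → Ω → ((Fin d → ℝ) × (Fin d → ℝ)) → (Fin d → ℝ))
    (hW : ∀ t₀ t ω x, W t₀ t ω x = u ω t (x.1 + ρ t₀ ω t) - u ω t (x.2 + ρ t₀ ω t))
    (w : ℝ → Ω → ((Fin d → ℝ) × (Fin d → ℝ)) → (Fin d → ℝ))
    (hw : ∀ t ω x, w t ω x = u ω t x.1 - u ω t x.2)
    (hWmeas : ∀ t₀ t, Measurable (W t₀ t))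
    (hwmeas : ∀ t, Measurable (w t))
    (hEulStat : ∀ t Δt : ℝ, P.map (w (t + Δt)) = P.map (w t)) :
    (∀ t t₀ : ℝ, P.map (W t₀ t) = P.map (w t)) ↔
      (∀ t₀ t Δt : ℝ, P.map (W t₀ (t + Δt)) = P.map (W t₀ t)) := by
  have hWw : ∀ t₀, W t₀ t₀ = w t₀ := by
    intro t₀
    funext ω x
    rw [hW, hw, hρ0]
    simp
  constructor
  · intro h t₀ t Δt
    rw [h (t + Δt) t₀, h t t₀, hEulStat]
  · intro h t t₀
    have h1 : P.map (W t₀ t) = P.map (W t₀ t₀) := by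
      have := h t₀ t₀ (t - t₀)
      rwa [show t₀ + (t - t₀) = t by ring] at this
    have h2 : P.map (w t) = P.map (w t₀) := by
      have := hEulStat t₀ (t - t₀)
      rwa [show t₀ + (t - t₀) = t by ring] at this
    rw [h1, h2, hWw]
end

section
/- Let d ≥ 1, let u : (Fin d → ℝ) × ℝ → (Fin d → ℝ) and U : (Fin d → ℝ) × ℝ → ℝ be differentiable, fix x₀ ∈ (Fin d → ℝ), and let ρ : ℝ → (Fin d → ℝ) be a trajectory satisfying HasDerivAt ρ (u (x₀ + ρ t, t)) t for all t. Define the quasi-Lagrangian transform 𝒰 : (Fin d → ℝ) × ℝ → ℝ by 𝒰 (x, t) = U (x + ρ t, t), and the quasi-Lagrangian velocity difference w (x, t) = u (x + ρ t, t) − u (x₀ + ρ t, t). Then for all (x, t), the quasi-Lagrangian material derivative equals the Eulerian material derivative evaluated along the shifted point: ∂𝒰/∂t (x, t) + ∑_{α} w_α (x, t) · ∂𝒰/∂x_α (x, t) = ∂U/∂t (x + ρ t, t) + ∑_{α} u_α (x + ρ t, t) · ∂U/∂x_α (x + ρ t, t), where ∂/∂x_α denotes the partial derivative in the direction Pi.single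 α 1 and ∂/∂t the partial derivative in the time variable (both expressible via fderiv). -/
/-- Transformation of the material derivative under the quasi-Lagrangian
transformation: the quasi-Lagrangian material derivative, with advection written
in terms of velocity differences, equals the Eulerian material derivative
evaluated along the shifted point. -/
theorem quasiLagrangian_material_derivative
    (d : ℕ) (hd : 1 ≤ d)
    (u : (Fin d → ℝ) × ℝ → (Fin d → ℝ))
    (U : (Fin d → ℝ) × ℝ → ℝ)
    (hu : Differentiable ℝ u) (hU : Differentiable ℝ U)
    (x₀ : Fin d → ℝ) (ρ : ℝ → (Fin d → ℝ))
    (hρ : ∀ t : ℝ, HasDerivAt ρ (u (x₀ + ρ t, t)) t)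
    (𝒰 : (Fin d → ℝ) × ℝ → ℝ)
    (h𝒰 : ∀ x t, 𝒰 (x, t) = U (x + ρ t, t))
    (w : (Fin d → ℝ) × ℝ → (Fin d → ℝ))
    (hw : ∀ x t, w (x, t) = u (x + ρ t, t) - u (x₀ + ρ t, t)) :
    ∀ (x : Fin d → ℝ) (t : ℝ),
      fderiv ℝ 𝒰 (x, t) (0, 1)
        + ∑ α : Fin d, w (x, t) α * fderiv ℝ 𝒰 (x, t) (Pi.single α 1, 0)
      = fderiv ℝ U (x + ρ t, t) (0, 1)
        + ∑ α : Fin d, u (x + ρ t, t) α * fderiv ℝ U (x + ρ t, t) (Pi.single α 1, 0) := by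
  intro x t
  have h𝒰fun : 𝒰 = fun q : (Fin d → ℝ) × ℝ => U (q.1 + ρ q.2, q.2) := by
    funext q
    have := h𝒰 q.1 q.2
    simpa using this
  set p : (Fin d → ℝ) × ℝ := (x + ρ t, t) with hp
  set c : Fin d → ℝ := u (x₀ + ρ t, t) with hc
  set D := fderiv ℝ U p with hD
  -- derivative of the shift map
  have hρ' : HasFDerivAt ρ ((1 : ℝ →L[ℝ] ℝ).smulRight c) t := (hρ t).hasFDerivAt
  have hF1 : HasFDerivAt (fun q : (Fin d → ℝ) × ℝ => q.1 + ρ q.2)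
      (ContinuousLinearMap.fst ℝ (Fin d → ℝ) ℝ
        + ((1 : ℝ →L[ℝ] ℝ).smulRight c).comp (ContinuousLinearMap.snd ℝ (Fin d → ℝ) ℝ))
      (x, t) :=
    (hasFDerivAt_fst).add (hρ'.comp (x, t) hasFDerivAt_snd)
  have hF : HasFDerivAt (fun q : (Fin d → ℝ) × ℝ => ((q.1 + ρ q.2, q.2) : (Fin d → ℝ) × ℝ))
      ((ContinuousLinearMap.fst ℝ (Fin d → ℝ) ℝ
        + ((1 : ℝ →L[ℝ] ℝ).smulRight c).comp (ContinuousLinearMap.snd ℝ (Fin d → ℝ) ℝ)).prod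
        (ContinuousLinearMap.snd ℝ (Fin d → ℝ) ℝ)) (x, t) :=
    HasFDerivAt.prodMk hF1 hasFDerivAt_snd
  have h𝒰' : HasFDerivAt 𝒰 (D.comp
      ((ContinuousLinearMap.fst ℝ (Fin d → ℝ) ℝ
        + ((1 : ℝ →L[ℝ] ℝ).smulRight c).comp (ContinuousLinearMap.snd ℝ (Fin d → ℝ) ℝ)).prod
        (ContinuousLinearMap.snd ℝ (Fin d → ℝ) ℝ))) (x, t) := by
    rw [h𝒰fun]
    exact (hU p).hasFDerivAt.comp (x, t) hF
  rw [h𝒰'.fderiv]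
  have e1 : ∀ v : (Fin d → ℝ) × ℝ,
      (D.comp ((ContinuousLinearMap.fst ℝ (Fin d → ℝ) ℝ
        + ((1 : ℝ →L[ℝ] ℝ).smulRight c).comp (ContinuousLinearMap.snd ℝ (Fin d → ℝ) ℝ)).prod
        (ContinuousLinearMap.snd ℝ (Fin d → ℝ) ℝ))) v = D (v.1 + v.2 • c, v.2) := by
    intro v; rfl
  rw [e1 (0, 1)]
  simp only [e1]
  -- expand D (c, 1)
  have hsplit : D ((0 : Fin d → ℝ) + (1:ℝ) • c, (1:ℝ))
      = D (0, 1) + ∑ α : Fin d, c α * D (Pi.single α 1, 0) := by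
    have hcsum : ((0 : Fin d → ℝ) + (1:ℝ) • c, (1:ℝ))
        = ((0:Fin d → ℝ), (1:ℝ)) + ∑ α : Fin d, c α • ((Pi.single α 1 : Fin d → ℝ), (0:ℝ)) := by
      rw [Prod.ext_iff]
      constructor
      · rw [Prod.fst_add, Prod.fst_sum]
        funext j
        simp [Finset.sum_apply, Pi.single_apply]
      · rw [Prod.snd_add, Prod.snd_sum]
        simp
    rw [hcsum, map_add, map_sum]
    congr 1
    apply Finset.sum_congr rfl
    intro α _
    rw [map_smul]
    rfl
  rw [hsplit]
  have hsimp : ∀ α : Fin d, D ((Pi.single α 1 : Fin d → ℝ) + (0:ℝ) • c, (0:ℝ))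
      = D (Pi.single α 1, 0) := by intro α; simp
  simp only [hsimp, hw]
  have hup : u (x + ρ t, t) = u p := rfl
  rw [add_assoc, ← Finset.sum_add_distrib]
  congr 1
  apply Finset.sum_congr rfl
  intro α _
  simp [hup, Pi.sub_apply, hc]
  ring
end

section
/- Let d ≥ 1 and ζ ∈ ℝ. Then the following are equivalent: (i) ζ = 1; (ii) for all x₁, x₁', x₂, x₂' ∈ (Fin d → ℝ) (equivalently, in EuclideanSpace ℝ (Fin d)) with x₁ ≠ x₂, x₁ ≠ x₂', x₁' ≠ x₂' and x₁' ≠ x₂, the combination ‖x₁ − x₂‖^(ζ−1) − ‖x₁ − x₂'‖^(ζ−1) + ‖x₁' − x₂'‖^(ζ−1) − ‖x₁' − x₂‖^(ζ−1) equals 0 (with real powers taken as Real.rpow of the Euclidean distances). Consequently the homogeneous equation 𝒪₂F₃ = 0, whose left-hand side equals A·[r₁₂^{ζ₃−1} − r₁₂'^{ζ₃−1} + r₁'₂'^{ζ₃−1} − r₁'₂^{ζ₃−1}] with A ≠ 0, is satisfied for every configuration of velocity differences if and only if ζ₃ = 1. -/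
/-- The solvability condition `𝒪₂F₃ = 0` determines the scaling exponent:
the combination `r₁₂^(ζ-1) - r₁₂'^(ζ-1) + r₁'₂'^(ζ-1) - r₁'₂^(ζ-1)` of Euclidean
distances vanishes for every configuration of distinct points if and only if `ζ = 1`. -/
theorem zeta3_eq_one_iff_solvability
    (d : ℕ) (hd : 1 ≤ d) (ζ : ℝ) :
    ζ = 1 ↔
      ∀ x₁ x₁' x₂ x₂' : EuclideanSpace ℝ (Fin d),
        x₁ ≠ x₂ → x₁ ≠ x₂' → x₁' ≠ x₂' → x₁' ≠ x₂ →
        ‖x₁ - x₂‖ ^ (ζ - 1) - ‖x₁ - x₂'‖ ^ (ζ - 1)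
          + ‖x₁' - x₂'‖ ^ (ζ - 1) - ‖x₁' - x₂‖ ^ (ζ - 1) = 0 := by
  constructor
  · rintro rfl x₁ x₁' x₂ x₂' _ _ _ _
    simp [Real.rpow_zero]
  · intro h
    set i : Fin d := ⟨0, hd⟩
    set e : EuclideanSpace ℝ (Fin d) := EuclideanSpace.single i (1 : ℝ) with he
    have hne : ‖e‖ = 1 := by simp [he]
    have h2 : ‖(2 : ℝ) • e‖ = 2 := by
      rw [norm_smul, hne]; norm_num
    have key := h 0 ((3 : ℝ) • e) e ((2 : ℝ) • e)
      (by
        intro hc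
        have : ‖e‖ = 0 := by rw [← hc]; simp
        rw [hne] at this; norm_num at this)
      (by
        intro hc
        have : ‖(2 : ℝ) • e‖ = 0 := by rw [← hc]; simp
        rw [h2] at this; norm_num at this)
      (by
        intro hc
        have : ((3 : ℝ) - 2) • e = 0 := by rw [sub_smul, hc, sub_self]
        have : e = 0 := by
          have h3 : (3 : ℝ) - 2 ≠ 0 := by norm_num
          exact (smul_eq_zero.mp this).resolve_left h3
        rw [this] at hne; simp at hne)
      (by
        intro hc
        have : ((3 : ℝ) - 1) • e = 0 := by rw [sub_smul, hc, one_smul, sub_self]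
        have he0 : e = 0 := by
          have h2ne : (3 : ℝ) - 1 ≠ 0 := by norm_num
          exact (smul_eq_zero.mp this).resolve_left h2ne
        rw [he0] at hne; simp at hne)
    have e1 : ‖(0 : EuclideanSpace ℝ (Fin d)) - e‖ = 1 := by
      rw [zero_sub, norm_neg, hne]
    have e2 : ‖(0 : EuclideanSpace ℝ (Fin d)) - (2 : ℝ) • e‖ = 2 := by
      rw [zero_sub, norm_neg, h2]
    have e3 : ‖(3 : ℝ) • e - (2 : ℝ) • e‖ = 1 := by
      rw [← sub_smul]; norm_num [norm_smul, hne]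
    have e4 : ‖(3 : ℝ) • e - e‖ = 2 := by
      nth_rewrite 2 [← one_smul ℝ e]
      rw [← sub_smul]; norm_num [norm_smul, hne]
    rw [e1, e2, e3, e4, Real.one_rpow] at key
    have h21 : (2 : ℝ) ^ (ζ - 1) = 1 := by linarith
    have hlog : (ζ - 1) * Real.log 2 = 0 := by
      rw [← Real.log_rpow (by norm_num : (0:ℝ) < 2), h21, Real.log_one]
    have : ζ - 1 = 0 := by
      rcases mul_eq_zero.mp hlog with h | h
      · exact h
      · exact absurd h (Real.log_ne_zero_of_pos_of_ne_one (by norm_num) (by norm_num))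
    linarith
end
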